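/- The subword complexity of the infinite Tribonacci word is 2n + 1: for every n ≥ 0, the number of distinct factors of length n of T equals 2n + 1. -/

import Mathlib

/-
Dropping the first letter maps the factors of length `n + 1` of `T` onto those of length `n`.
Every factor has exactly one left extension, except the prefix of length `n`, which has all
three; hence the complexity grows by exactly `2` at each step.

Both facts come from desubstitution. The images `01, 02, 0` of the letters under the morphism
`σ` (`tribSubst` on words) are blocks that begin exactly at the zeros, and `1`, `2` are always
followed by `0`; so a factor of `σ(T) = T` that starts with a zero lifts to a factor of `T`,
uniquely up to an incomplete last block `0`. A left special factor `0 w` thus lifts to a left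
special factor of an earlier iterate, and induction on the iterate shows that it is a prefix;
conversely the three left extensions of a prefix are the images of the left extensions `2 u`,
`0 u`, `1 u` of its preimage `u`.
-/

/-- The Tribonacci morphism: 0 → 01, 1 → 02, 2 → 0. -/
def tribMap (c : ℕ) : List ℕ := if c = 0 then [0,1] else if c = 1 then [0,2] else [0]

/-- Iterates of the Tribonacci morphism on the word `0`. -/
def tribIter : ℕ → List ℕ
  | 0 => [0]
  | k+1 => (tribIter k).flatMap tribMap

/-- The infinite Tribonacci word, the fixed point starting with 0 of 0→01, 1→02, 2→0. -/
def tribWord (n : ℕ) : ℕ := (tribIter (n+1)).getD n 0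

/-- The Tribonacci numbers. -/
def trib : ℕ → ℕ
  | 0 => 0
  | 1 => 1
  | 2 => 1
  | n+3 => trib (n+2) + trib (n+1) + trib n

lemma Set.ncard_add_one_eq_ncard_add_ncard_fiber {α β : Type*} {f : α → β} {s : Set α}
    {t : Set β} {b : β} (hs : s.Finite) (hb : b ∈ t)
    (himage : f '' (s \ f ⁻¹' {b}) = t \ {b})
    (hinj : (s \ f ⁻¹' {b}).InjOn f) : s.ncard + 1 = t.ncard + (s ∩ f ⁻¹' {b}).ncard := by
  have ht : t.Finite := (himage ▸ hs.sdiff.image f).of_sdiff (Set.finite_singleton b)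
  have h₁ := Set.ncard_inter_add_ncard_sdiff_eq_ncard s (f ⁻¹' {b}) hs
  have h₂ := Set.ncard_sdiff_singleton_add_one hb ht
  rw [← himage, hinj.ncard_image] at h₂
  omega

def tribSubst (l : List ℕ) : List ℕ := l.flatMap tribMap

@[simp] lemma tribSubst_nil : tribSubst [] = [] := rfl

@[simp] lemma tribSubst_cons (c : ℕ) (l : List ℕ) :
    tribSubst (c :: l) = tribMap c ++ tribSubst l :=
  List.flatMap_cons

@[simp] lemma tribSubst_append (l l' : List ℕ) :
    tribSubst (l ++ l') = tribSubst l ++ tribSubst l' :=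
  List.flatMap_append

lemma tribIter_succ (k : ℕ) : tribIter (k + 1) = tribSubst (tribIter k) := rfl

lemma tribMap_eq_cons (c : ℕ) : ∃ t, tribMap c = 0 :: t := by
  unfold tribMap; split_ifs <;> exact ⟨_, rfl⟩

lemma tribMap_ne_nil (c : ℕ) : tribMap c ≠ [] := by
  obtain ⟨t, ht⟩ := tribMap_eq_cons c; simp [ht]

lemma exists_tribMap_getLast? {a : ℕ} (ha : a ≤ 2) :
    ∃ c ≤ 2, (tribMap c).getLast? = some a := by
  interval_cases a
  exacts [⟨2, by simp [tribMap]⟩, ⟨0, by simp [tribMap]⟩, ⟨1, by simp [tribMap]⟩]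

lemma le_two_of_mem_tribMap {c x : ℕ} (h : x ∈ tribMap c) : x ≤ 2 := by
  unfold tribMap at h; split_ifs at h <;> simp at h <;> omega

lemma tribMap_append_inj {a b : ℕ} {X Y : List ℕ} (ha : a ≤ 2) (hb : b ≤ 2)
    (hX : ∀ x ∈ X.head?, x = 0) (hY : ∀ y ∈ Y.head?, y = 0)
    (h : tribMap a ++ X = tribMap b ++ Y) : a = b ∧ X = Y := by
  interval_cases a <;> interval_cases b <;> rcases X with _ | ⟨x, X⟩ <;>
    rcases Y with _ | ⟨y, Y⟩ <;> simp_all [tribMap]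

lemma head?_tribSubst (l : List ℕ) : ∀ x ∈ (tribSubst l).head?, x = 0 := by
  cases l with
  | nil => simp
  | cons c l => obtain ⟨t, ht⟩ := tribMap_eq_cons c; simp [ht]

lemma le_two_of_mem_tribSubst {l : List ℕ} {x : ℕ} (h : x ∈ tribSubst l) : x ≤ 2 := by
  obtain ⟨c, -, hx⟩ := List.mem_flatMap.mp h
  exact le_two_of_mem_tribMap hx

lemma length_le_length_tribSubst (l : List ℕ) : l.length ≤ (tribSubst l).length := by
  induction l with
  | nil => simp
  | cons c l ih =>
    have := List.length_pos_iff.mpr (tribMap_ne_nil c)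
    simp only [tribSubst_cons, List.length_append, List.length_cons]
    omega

lemma isChain_tribSubst (l : List ℕ) : (tribSubst l).IsChain (fun x y => x = 0 ∨ y = 0) := by
  induction l with
  | nil => simp
  | cons c l ih =>
    refine List.IsChain.append ?_ ih fun _ _ y hy => Or.inr (head?_tribSubst l y hy)
    unfold tribMap; split_ifs <;> simp

lemma eq_nil_of_tribMap_eq_append {c : ℕ} {x r : List ℕ} (h : tribMap c = x ++ 0 :: r) :
    x = [] := by
  unfold tribMap at h
  split_ifs at h <;> rcases x with _ | ⟨_, _ | ⟨_, x⟩⟩ <;> simp_all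

lemma exists_split_of_tribSubst_eq_append {L x y : List ℕ} (h : tribSubst L = x ++ y)
    (hy : ∀ e ∈ y.head?, e = 0) :
    ∃ L₁ L₂, L = L₁ ++ L₂ ∧ tribSubst L₁ = x ∧ tribSubst L₂ = y := by
  induction L generalizing x with
  | nil =>
    obtain ⟨rfl, rfl⟩ := List.append_eq_nil_iff.mp h.symm
    exact ⟨[], [], rfl, rfl, rfl⟩
  | cons c L ih =>
    rw [tribSubst_cons, List.append_eq_append_iff] at h
    rcases h with ⟨x', rfl, hL⟩ | ⟨r, hc, rfl⟩
    · obtain ⟨L₁, L₂, rfl, rfl, rfl⟩ := ih hL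
      exact ⟨c :: L₁, L₂, rfl, by simp, rfl⟩
    · rcases r with _ | ⟨e, r⟩
      · exact ⟨[c], L, rfl, by simpa using hc, rfl⟩
      · obtain rfl : e = 0 := hy e (by simp)
        obtain rfl := eq_nil_of_tribMap_eq_append hc
        exact ⟨[], c :: L, rfl, rfl, by simp [hc]⟩

lemma head?_of_prefix_tribSubst {w l : List ℕ} (h : w <+: tribSubst l) :
    ∀ x ∈ w.head?, x = 0 := by
  obtain ⟨t, ht⟩ := h
  intro x hx
  exact head?_tribSubst l x (by simp_all [← ht, List.head?_append])

lemma exists_eq_tribSubst_append_of_prefix {A B w : List ℕ} (hA : ∀ x ∈ A, x ≤ 2)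
    (hB : ∀ x ∈ B, x ≤ 2) (hwA : w <+: tribSubst A) (hwB : w <+: tribSubst B) :
    ∃ u s, u <+: A ∧ u <+: B ∧ s <+: [0] ∧ w = tribSubst u ++ s := by
  induction A generalizing B w with
  | nil =>
    obtain rfl := List.prefix_nil.mp hwA
    exact ⟨[], [], List.nil_prefix, List.nil_prefix, List.nil_prefix, rfl⟩
  | cons a A ih =>
    by_cases hw : w.length ≤ 1
    · refine ⟨[], w, List.nil_prefix, List.nil_prefix, ?_, rfl⟩
      have := head?_of_prefix_tribSubst hwA
      rcases w with _ | ⟨x, _ | ⟨_, _⟩⟩ <;> simp_all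
    rcases B with _ | ⟨b, B⟩
    · simp_all
    have hlen (c : ℕ) : (tribMap c).length ≤ w.length := by
      unfold tribMap; split_ifs <;> simp <;> omega
    obtain ⟨w₁, rfl⟩ := List.prefix_of_prefix_length_le (by simp) hwA (hlen a)
    obtain ⟨w₂, hw₂⟩ := List.prefix_of_prefix_length_le (by simp) hwB (hlen b)
    rw [tribSubst_cons, List.prefix_append_right_inj] at hwA
    rw [← hw₂, tribSubst_cons, List.prefix_append_right_inj] at hwB
    obtain ⟨rfl, rfl⟩ := tribMap_append_inj (hA a (by simp)) (hB b (by simp))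
      (head?_of_prefix_tribSubst hwA) (head?_of_prefix_tribSubst hwB) hw₂.symm
    obtain ⟨u, s, huA, huB, hs, rfl⟩ :=
      ih (fun x hx => hA x (by simp [hx])) (fun x hx => hB x (by simp [hx])) hwA hwB
    exact ⟨a :: u, s, by simpa, by simpa, hs, by simp⟩

lemma tribSubst_prefix_tribSubst {u v : List ℕ} (h : u <+: v) : tribSubst u <+: tribSubst v :=
  let ⟨t, ht⟩ := h; ⟨tribSubst t, by rw [← ht, tribSubst_append]⟩

lemma tribSubst_append_prefix_tribSubst_concat {u s : List ℕ} (hs : s <+: [0]) (e : ℕ) :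
    tribSubst u ++ s <+: tribSubst (u ++ [e]) := by
  obtain ⟨t, ht⟩ := tribMap_eq_cons e
  simpa [ht] using hs.trans (List.prefix_cons_inj 0 |>.mpr List.nil_prefix)

lemma tribIter_eq_cons (k : ℕ) : ∃ t, tribIter k = 0 :: t := by
  induction k with
  | zero => exact ⟨[], rfl⟩
  | succ k ih =>
    obtain ⟨t, ht⟩ := ih
    obtain ⟨t', ht'⟩ := tribMap_eq_cons 0
    exact ⟨t' ++ tribSubst t, by simp [tribIter_succ, ht, ht']⟩

lemma tribIter_prefix_succ (k : ℕ) : tribIter k <+: tribIter (k + 1) := by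
  induction k with
  | zero => exact ⟨[1], rfl⟩
  | succ k ih => exact tribSubst_prefix_tribSubst ih

lemma length_tribIter_lt_succ (k : ℕ) : (tribIter k).length < (tribIter (k + 1)).length := by
  obtain ⟨t, ht⟩ := tribIter_eq_cons k
  have := length_le_length_tribSubst t
  simp [tribIter_succ, ht, tribMap]
  omega

lemma exists_append_singleton_prefix_tribIter_succ {u : List ℕ} {k : ℕ} (h : u <+: tribIter k) :
    ∃ e, u ++ [e] <+: tribIter (k + 1) := by
  obtain ⟨t, ht⟩ := h.trans (tribIter_prefix_succ k)
  obtain ⟨e, t, rfl⟩ := List.exists_cons_of_ne_nil (show t ≠ [] by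
    rintro rfl
    have := h.length_le.trans_lt (length_tribIter_lt_succ k)
    simp_all)
  exact ⟨e, t, by simpa using ht⟩

lemma tribIter_prefix_of_le {k m : ℕ} (h : k ≤ m) : tribIter k <+: tribIter m := by
  induction m, h using Nat.le_induction with
  | base => exact List.prefix_refl _
  | succ m _ ih => exact ih.trans (tribIter_prefix_succ m)

lemma lt_length_tribIter (k : ℕ) : k < (tribIter k).length := by
  induction k with
  | zero => simp [tribIter]
  | succ k ih => exact lt_of_le_of_lt ih (length_tribIter_lt_succ k)

lemma le_two_of_mem_tribIter {k x : ℕ} (h : x ∈ tribIter k) : x ≤ 2 := by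
  cases k with
  | zero => simp_all [tribIter]
  | succ k => exact le_two_of_mem_tribSubst h

lemma isChain_tribIter (k : ℕ) : (tribIter k).IsChain (fun x y => x = 0 ∨ y = 0) := by
  cases k with
  | zero => simp [tribIter]
  | succ k => exact isChain_tribSubst _

lemma getElem_tribIter {k j : ℕ} (h : j < (tribIter k).length) :
    (tribIter k)[j] = tribWord j := by
  have hj : j < (tribIter (j + 1)).length := (lt_length_tribIter (j + 1)).trans' (by omega)
  rw [tribWord, List.getD_eq_getElem _ _ hj,
    (tribIter_prefix_of_le (le_max_left k (j + 1))).getElem h,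
    (tribIter_prefix_of_le (le_max_right k (j + 1))).getElem hj]

def IsTribFactor (w : List ℕ) : Prop := ∃ k, w <:+: tribIter k

def tribPrefix (n : ℕ) : List ℕ := (List.range n).map tribWord

namespace IsTribFactor

lemma of_infix {w w' : List ℕ} (hw : IsTribFactor w) (h : w' <:+: w) : IsTribFactor w' :=
  let ⟨k, hk⟩ := hw; ⟨k, h.trans hk⟩

lemma tribSubst {w : List ℕ} (hw : IsTribFactor w) : IsTribFactor (tribSubst w) := by
  obtain ⟨k, s, t, hst⟩ := hw
  exact ⟨k + 1, _root_.tribSubst s, _root_.tribSubst t, by simp [tribIter_succ, ← hst]⟩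

lemma exists_append_singleton {w : List ℕ} (hw : IsTribFactor w) :
    ∃ e, IsTribFactor (w ++ [e]) := by
  obtain ⟨k, s, t, hst⟩ := hw
  obtain ⟨e, r, hr⟩ := exists_append_singleton_prefix_tribIter_succ ⟨t, hst⟩
  exact ⟨e, k + 1, s, r, by simpa using hr⟩

lemma le_two {w : List ℕ} (hw : IsTribFactor w) {x : ℕ} (hx : x ∈ w) : x ≤ 2 :=
  let ⟨_, hk⟩ := hw; le_two_of_mem_tribIter (hk.subset hx)

lemma eq_zero_of_cons_cons {a x : ℕ} {w : List ℕ} (hw : IsTribFactor (a :: x :: w))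
    (ha : a ≠ 0) : x = 0 := by
  obtain ⟨k, hk⟩ := hw
  have := List.isChain_cons_cons.mp ((isChain_tribIter k).infix hk)
  tauto

end IsTribFactor

lemma tribPrefix_prefix_tribIter (n : ℕ) : tribPrefix n <+: tribIter n := by
  refine List.prefix_iff_eq_take.mpr (List.ext_getElem ?_ fun _ _ _ => ?_)
  · simpa [tribPrefix] using (lt_length_tribIter n).le
  · simp [tribPrefix, getElem_tribIter]

lemma eq_tribPrefix_of_prefix {w : List ℕ} {k : ℕ} (h : w <+: tribIter k) :
    w = tribPrefix w.length :=
  List.ext_getElem (by simp [tribPrefix]) fun j h₁ _ => by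
    simp [tribPrefix, h.getElem h₁, getElem_tribIter]

lemma isTribFactor_tribPrefix (n : ℕ) : IsTribFactor (tribPrefix n) :=
  ⟨n, (tribPrefix_prefix_tribIter n).isInfix⟩

lemma isTribFactor_cons_of_prefix {k : ℕ} {w : List ℕ} (hw : w <+: tribIter k) {a : ℕ}
    (ha : a ≤ 2) : IsTribFactor (a :: w) := by
  induction k generalizing w a with
  | zero =>
    have hpre : a :: w <+: [a, 0] := List.prefix_cons_inj a |>.mpr hw
    -- `tribIter 4 = 0102010010201` contains `00`, `10` and `20`.
    exact ⟨4, hpre.isInfix.trans (by interval_cases a <;> decide)⟩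
  | succ k ih =>
    rw [tribIter_succ] at hw
    obtain ⟨u, s, hu, -, hs, rfl⟩ :=
      exists_eq_tribSubst_append_of_prefix (fun _ => le_two_of_mem_tribIter)
        (fun _ => le_two_of_mem_tribIter) hw hw
    obtain ⟨c, hc, hca⟩ := exists_tribMap_getLast? ha
    obtain ⟨p, hp⟩ := List.getLast?_eq_some_iff.mp hca
    obtain ⟨e, he⟩ := (ih hu hc).exists_append_singleton
    have h₁ : a :: (tribSubst u ++ s) <+: a :: tribSubst (u ++ [e]) :=
      (List.prefix_cons_inj a).mpr (tribSubst_append_prefix_tribSubst_concat hs e)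
    have h₂ : a :: tribSubst (u ++ [e]) <:+ tribSubst (c :: u ++ [e]) := ⟨p, by simp [hp]⟩
    exact he.tribSubst.of_infix (h₁.isInfix.trans h₂.isInfix)

lemma exists_cons_infix_of_cons_infix_tribSubst {a : ℕ} {w L : List ℕ}
    (h : a :: 0 :: w <:+: tribSubst L) :
    ∃ c L', c :: L' <:+: L ∧ 0 :: w <+: tribSubst L' ∧ (tribMap c).getLast? = some a := by
  obtain ⟨s, t, hst⟩ := h
  obtain ⟨L₁, L₂, rfl, h₁, h₂⟩ :=
    exists_split_of_tribSubst_eq_append (L := L) (x := s ++ [a]) (y := 0 :: w ++ t)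
      (by simp [← hst]) (by simp)
  obtain ⟨l, c, rfl⟩ := (List.eq_nil_or_concat L₁).resolve_left (by rintro rfl; simp at h₁)
  refine ⟨c, L₂, ⟨l, [], by simp⟩, ⟨t, h₂.symm⟩, ?_⟩
  have := congrArg List.getLast? h₁
  simpa [tribMap_ne_nil] using this

lemma exists_prefix_tribIter_of_cons_infix {k a b : ℕ} {w : List ℕ} (hab : a ≠ b)
    (ha : a :: w <:+: tribIter k) (hb : b :: w <:+: tribIter k) : ∃ m, w <+: tribIter m := by
  induction k generalizing w a b with
  | zero =>
    rcases w with _ | ⟨x, w⟩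
    · exact ⟨0, List.nil_prefix⟩
    · simpa [tribIter] using ha.length_le
  | succ k ih =>
    rcases w with _ | ⟨x, w⟩
    · exact ⟨0, List.nil_prefix⟩
    obtain rfl : x = 0 := by
      rcases Nat.eq_zero_or_pos a with rfl | ha₀
      · exact IsTribFactor.eq_zero_of_cons_cons ⟨_, hb⟩ hab.symm
      · exact IsTribFactor.eq_zero_of_cons_cons ⟨_, ha⟩ ha₀.ne'
    rw [tribIter_succ] at ha hb
    obtain ⟨c, A, hcA, hwA, hc⟩ := exists_cons_infix_of_cons_infix_tribSubst ha
    obtain ⟨d, B, hdB, hwB, hd⟩ := exists_cons_infix_of_cons_infix_tribSubst hb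
    obtain ⟨u, s, huA, huB, hs, hw⟩ := exists_eq_tribSubst_append_of_prefix
      (fun _ hx => le_two_of_mem_tribIter (hcA.subset (List.mem_cons_of_mem c hx)))
      (fun _ hx => le_two_of_mem_tribIter (hdB.subset (List.mem_cons_of_mem d hx))) hwA hwB
    have hcd : c ≠ d := by
      rintro rfl
      exact hab (Option.some_injective _ (hc.symm.trans hd))
    obtain ⟨m, hm⟩ := ih hcd (((List.prefix_cons_inj c).mpr huA).isInfix.trans hcA)
      (((List.prefix_cons_inj d).mpr huB).isInfix.trans hdB)
    obtain ⟨e, he⟩ := exists_append_singleton_prefix_tribIter_succ hm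
    exact ⟨m + 2, hw ▸ (tribSubst_append_prefix_tribSubst_concat hs e).trans
      (tribSubst_prefix_tribSubst he)⟩

namespace IsTribFactor

lemma eq_tribPrefix_of_cons {a b : ℕ} {w : List ℕ} (hab : a ≠ b) (ha : IsTribFactor (a :: w))
    (hb : IsTribFactor (b :: w)) : w = tribPrefix w.length := by
  obtain ⟨k, hk⟩ := ha
  obtain ⟨l, hl⟩ := hb
  obtain ⟨m, hm⟩ := exists_prefix_tribIter_of_cons_infix hab
    (hk.trans (tribIter_prefix_of_le (le_max_left k l)).isInfix)
    (hl.trans (tribIter_prefix_of_le (le_max_right k l)).isInfix)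
  exact eq_tribPrefix_of_prefix hm

lemma exists_cons {w : List ℕ} (hw : IsTribFactor w) (hne : w ≠ tribPrefix w.length) :
    ∃ c, IsTribFactor (c :: w) := by
  obtain ⟨k, s, t, hst⟩ := hw
  rcases List.eq_nil_or_concat s with rfl | ⟨s, c, rfl⟩
  · exact absurd (eq_tribPrefix_of_prefix ⟨t, hst⟩) hne
  · exact ⟨c, k, s, t, by simpa using hst⟩

end IsTribFactor

def tribFactors (n : ℕ) : Set (List ℕ) := {w | IsTribFactor w ∧ w.length = n}

lemma tribFactors_finite (n : ℕ) : (tribFactors n).Finite := by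
  refine ((List.finite_length_eq (Fin 3) n).image (List.map Fin.val)).subset ?_
  rintro w ⟨hw, rfl⟩
  refine ⟨w.map (Fin.ofNat 3), by simp, ?_⟩
  conv_rhs => rw [← List.map_id w]
  rw [List.map_map]
  refine List.map_congr_left fun x hx => ?_
  simp [Nat.mod_eq_of_lt (Nat.lt_succ_of_le (hw.le_two hx))]

lemma ncard_tribFactors_succ (n : ℕ) :
    (tribFactors (n + 1)).ncard = (tribFactors n).ncard + 2 := by
  have hfiber : tribFactors (n + 1) ∩ List.tail ⁻¹' {tribPrefix n} =
      (· :: tribPrefix n) '' Set.Iic 2 := by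
    ext v
    constructor
    · rintro ⟨⟨hv, hlen⟩, hvt⟩
      obtain ⟨a, w, rfl⟩ := List.exists_cons_of_length_eq_add_one hlen
      exact ⟨a, hv.le_two List.mem_cons_self, by simp_all⟩
    · rintro ⟨a, ha, rfl⟩
      refine ⟨⟨isTribFactor_cons_of_prefix (tribPrefix_prefix_tribIter n) ha, ?_⟩, rfl⟩
      simp [tribPrefix]
  have himage : List.tail '' (tribFactors (n + 1) \ List.tail ⁻¹' {tribPrefix n}) =
      tribFactors n \ {tribPrefix n} := by
    ext w
    constructor
    · rintro ⟨v, ⟨⟨hv, hlen⟩, hvp⟩, rfl⟩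
      obtain ⟨a, w, rfl⟩ := List.exists_cons_of_length_eq_add_one hlen
      exact ⟨⟨hv.of_infix (List.suffix_cons a w).isInfix, by simpa using hlen⟩, hvp⟩
    · rintro ⟨⟨hw, rfl⟩, hne⟩
      obtain ⟨c, hc⟩ := hw.exists_cons hne
      exact ⟨c :: w, ⟨⟨hc, rfl⟩, hne⟩, rfl⟩
  have hinj : (tribFactors (n + 1) \ List.tail ⁻¹' {tribPrefix n}).InjOn List.tail := by
    rintro v ⟨⟨hv, hvlen⟩, hvp⟩ v' ⟨⟨hv', hv'len⟩, -⟩ htail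
    obtain ⟨a, w, rfl⟩ := List.exists_cons_of_length_eq_add_one hvlen
    obtain ⟨b, w', rfl⟩ := List.exists_cons_of_length_eq_add_one hv'len
    obtain rfl : w = w' := htail
    by_contra hab
    refine hvp (hv.eq_tribPrefix_of_cons (fun h => hab (by rw [h])) hv' |>.trans ?_)
    simp_all
  have hp : tribPrefix n ∈ tribFactors n := ⟨isTribFactor_tribPrefix n, by simp [tribPrefix]⟩
  have := Set.ncard_add_one_eq_ncard_add_ncard_fiber (tribFactors_finite (n + 1)) hp himage hinj
  rw [hfiber, Set.ncard_image_of_injective _ fun _ _ => List.head_eq_of_cons_eq,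
    Set.ncard_Iic_nat] at this
  omega

lemma tribFactors_zero : tribFactors 0 = {[]} := by
  ext w
  simp only [tribFactors, Set.mem_ofPred_eq, List.length_eq_zero_iff, Set.mem_singleton_iff,
    and_iff_right_iff_imp]
  rintro rfl
  exact ⟨0, List.nil_infix⟩

lemma ncard_tribFactors (n : ℕ) : (tribFactors n).ncard = 2 * n + 1 := by
  induction n with
  | zero => simp [tribFactors_zero]
  | succ n ih => rw [ncard_tribFactors_succ, ih]; ring

lemma map_range_tribWord_eq_take_drop {i n k : ℕ} (h : i + n ≤ (tribIter k).length) :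
    (List.range n).map (fun j => tribWord (i + j)) = ((tribIter k).drop i).take n :=
  List.ext_getElem (by simp; omega) fun j _ _ => by simp [getElem_tribIter]

lemma isTribFactor_iff {w : List ℕ} :
    IsTribFactor w ↔ ∃ i, w = (List.range w.length).map (fun j => tribWord (i + j)) := by
  constructor
  · rintro ⟨k, s, t, hst⟩
    refine ⟨s.length, ?_⟩
    rw [map_range_tribWord_eq_take_drop (k := k) (by simp [← hst])]
    simp [← hst]
  · rintro ⟨i, hi⟩
    refine ⟨i + w.length, ?_⟩
    nth_rewrite 1 [hi.trans (map_range_tribWord_eq_take_drop (lt_length_tribIter _).le)]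
    exact (List.take_prefix _ _).isInfix.trans (List.drop_suffix _ _).isInfix

/-- The subword complexity of the Tribonacci word is `2n + 1`. -/
theorem tribWord_subword_complexity (n : ℕ) :
    Set.ncard {w : List ℕ | ∃ i, w = (List.range n).map (fun j => tribWord (i + j))}
      = 2 * n + 1 := by
  have hset : {w : List ℕ | ∃ i, w = (List.range n).map (fun j => tribWord (i + j))} =
      tribFactors n := by
    ext w
    constructor
    · rintro ⟨i, rfl⟩
      exact ⟨isTribFactor_iff.mpr ⟨i, by simp⟩, by simp⟩
    · rintro ⟨hw, rfl⟩
      exact isTribFactor_iff.mp hw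
  rw [hset, ncard_tribFactors]
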